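/- Let d ≥ 2 and k ≥ 2 be integers. For R > 0 define v_k(R) := R(d−1) + (k−1)·log(R(d−1)) − log( (k−1)!·2^{d−1}(d−1)/ω_d ) and for u ∈ ℝ define ρ_R(u) := e^{−u} · ( ω_d ∫_0^R sinh(s)^{d−1} ds ) · (2^{d−1}(d−1) e^{−R(d−1)}/ω_d) · ( (u + v_k(R)) / (R(d−1)) )^{k−1}. Then there exist constants β > 0 and R₀ > 0, depending only on d and k, such that for all R ≥ R₀ and all c′ ≥ 0 one has ∫_{c′}^∞ ρ_R(u) du ≤ β · e^{−c′} · ( (c′ + v_k(R)) / (R(d−1)) )^{k−1}. -/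
import Mathlib


open Real

/-- Surface area of the (d-1)-dimensional Euclidean unit sphere. -/
noncomputable def omegaSphere (d : ℕ) : ℝ :=
  2 * Real.pi ^ ((d : ℝ) / 2) / Real.Gamma ((d : ℝ) / 2)

/-- Volume of a hyperbolic ball of radius `R` in `d`-dimensional hyperbolic space. -/
noncomputable def hypBallVol (d : ℕ) (R : ℝ) : ℝ :=
  omegaSphere d * ∫ s in (0:ℝ)..R, Real.sinh s ^ (d - 1)

/-- The threshold `v_k(R)`. -/
noncomputable def vThreshold (d k : ℕ) (R : ℝ) : ℝ :=
  R * ((d : ℝ) - 1) + ((k : ℝ) - 1) * Real.log (R * ((d : ℝ) - 1)) -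
    Real.log (((k - 1).factorial : ℝ) * 2 ^ (d - 1) * ((d : ℝ) - 1) / omegaSphere d)

/-- The Lebesgue density of the intensity measure of the exceedance point process. -/
noncomputable def rhoDensity (d k : ℕ) (R u : ℝ) : ℝ :=
  Real.exp (-u) * hypBallVol d R *
    (2 ^ (d - 1) * ((d : ℝ) - 1) * Real.exp (-R * ((d : ℝ) - 1)) / omegaSphere d) *
    ((u + vThreshold d k R) / (R * ((d : ℝ) - 1))) ^ (k - 1)

lemma omegaSphere_pos {d : ℕ} (hd : 2 ≤ d) : 0 < omegaSphere d := by
  have h2 : (0:ℝ) < (d:ℝ)/2 := by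
    have : (2:ℝ) ≤ d := by exact_mod_cast hd
    linarith
  have hg := Real.Gamma_pos_of_pos h2
  have hp : 0 < Real.pi ^ ((d:ℝ)/2) := Real.rpow_pos_of_pos Real.pi_pos _
  unfold omegaSphere
  positivity

lemma integral_sinh_pow_le {m : ℕ} (hm : 1 ≤ m) {R : ℝ} (hR : 0 ≤ R) :
    (∫ s in (0:ℝ)..R, Real.sinh s ^ m) ≤ Real.exp (m * R) / ((2:ℝ)^m * m) := by
  have hm0 : (0:ℝ) < m := by exact_mod_cast hm
  have int1 : IntervalIntegrable (fun s => Real.sinh s ^ m) MeasureTheory.volume 0 R :=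
    (Real.continuous_sinh.pow m).intervalIntegrable 0 R
  have int2 : IntervalIntegrable (fun s => (Real.exp s / 2)^m) MeasureTheory.volume 0 R :=
    ((Real.continuous_exp.div_const 2).pow m).intervalIntegrable 0 R
  have h1 : (∫ s in (0:ℝ)..R, Real.sinh s ^ m) ≤ ∫ s in (0:ℝ)..R, (Real.exp s / 2)^m := by
    apply intervalIntegral.integral_mono_on hR int1 int2
    intro s hs
    apply pow_le_pow_left₀ (Real.sinh_nonneg_iff.2 hs.1)
    rw [Real.sinh_eq]
    have := Real.exp_pos (-s)
    linarith
  have h2 : (∫ s in (0:ℝ)..R, (Real.exp s / 2)^m)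
      = ((2:ℝ)^m)⁻¹ * ((m:ℝ)⁻¹ * (Real.exp (m*R) - 1)) := by
    have heq : ∀ s : ℝ, (Real.exp s / 2)^m = ((2:ℝ)^m)⁻¹ * Real.exp ((m:ℝ) * s) := by
      intro s; rw [div_pow, Real.exp_nat_mul]; ring
    simp_rw [heq]
    rw [intervalIntegral.integral_const_mul]
    congr 1
    rw [intervalIntegral.integral_comp_mul_left (f := Real.exp) (c := (m:ℝ)) hm0.ne']
    simp [integral_exp, smul_eq_mul]
  have h3 : ((2:ℝ)^m)⁻¹ * ((m:ℝ)⁻¹ * (Real.exp (m*R) - 1)) ≤ Real.exp (m * R) / ((2:ℝ)^m * m) := by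
    rw [div_eq_mul_inv, mul_inv]
    have h4 : Real.exp (m*R) - 1 ≤ Real.exp (m*R) := by linarith
    calc ((2:ℝ)^m)⁻¹ * ((m:ℝ)⁻¹ * (Real.exp (m*R) - 1))
        ≤ ((2:ℝ)^m)⁻¹ * ((m:ℝ)⁻¹ * Real.exp (m*R)) := by gcongr
      _ = Real.exp (m*R) * (((2:ℝ)^m)⁻¹ * ((m:ℝ))⁻¹) := by ring
  linarith [h1, h2 ▸ h1, h3]

set_option maxHeartbeats 1000000 in
theorem stmt_16 (d k : ℕ) (hd : 2 ≤ d) (hk : 2 ≤ k) :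
    ∃ β R₀ : ℝ, 0 < β ∧ 0 < R₀ ∧ ∀ R : ℝ, R₀ ≤ R → ∀ c' : ℝ, 0 ≤ c' →
      (∫ u in Set.Ioi c', rhoDensity d k R u) ≤
        β * Real.exp (-c') * ((c' + vThreshold d k R) / (R * ((d : ℝ) - 1))) ^ (k - 1) := by
  have hω := omegaSphere_pos hd
  have hk0 : (0:ℝ) < k := by positivity
  have hk1 : (1:ℝ) ≤ k := by exact_mod_cast Nat.one_le_of_lt hk
  set cst : ℝ := ((k - 1).factorial : ℝ) * 2 ^ (d - 1) * ((d : ℝ) - 1) / omegaSphere d with hcst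
  refine ⟨(k:ℝ)^k, max 1 (1 + Real.log cst), by positivity, lt_of_lt_of_le one_pos (le_max_left _ _), ?_⟩
  intro R hR c' hc'
  have hR1 : (1:ℝ) ≤ R := le_trans (le_max_left _ _) hR
  have hR0 : (0:ℝ) ≤ R := by linarith
  have hd1 : (1:ℝ) ≤ (d:ℝ) - 1 := by
    have : (2:ℝ) ≤ d := by exact_mod_cast hd
    linarith
  set w : ℝ := R * ((d:ℝ) - 1) with hwdef
  have hw1 : (1:ℝ) ≤ w := by nlinarith
  have hw0 : (0:ℝ) < w := by linarith
  set v : ℝ := vThreshold d k R with hvdef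
  have hv1 : (1:ℝ) ≤ v := by
    have hlw : 0 ≤ Real.log w := Real.log_nonneg hw1
    have hRc : 1 + Real.log cst ≤ R := le_trans (le_max_right _ _) hR
    have hRw : R ≤ w := by nlinarith
    have : v = w + ((k:ℝ) - 1) * Real.log w - Real.log cst := rfl
    rw [this]
    nlinarith
  have hcv : (1:ℝ) ≤ c' + v := by linarith
  -- the constant A
  set A : ℝ := hypBallVol d R *
      (2 ^ (d - 1) * ((d : ℝ) - 1) * Real.exp (-R * ((d : ℝ) - 1)) / omegaSphere d) with hAdef
  have hI0 : 0 ≤ ∫ s in (0:ℝ)..R, Real.sinh s ^ (d - 1) := by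
    apply intervalIntegral.integral_nonneg hR0
    intro s hs
    exact pow_nonneg (Real.sinh_nonneg_iff.2 hs.1) _
  have hA0 : 0 ≤ A := by
    have h1 : 0 ≤ hypBallVol d R := by
      unfold hypBallVol; positivity
    have h2 : 0 ≤ 2 ^ (d - 1) * ((d : ℝ) - 1) * Real.exp (-R * ((d : ℝ) - 1)) / omegaSphere d := by
      positivity
    exact mul_nonneg h1 h2
  have hcastd : ((d - 1 : ℕ) : ℝ) = (d:ℝ) - 1 := by
    have : 1 ≤ d := by omega
    push_cast [this]; ring
  have hA1 : A ≤ 1 := by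
    have hI := integral_sinh_pow_le (m := d - 1) (by omega) hR0
    rw [hcastd] at hI
    have hAeq : A = (∫ s in (0:ℝ)..R, Real.sinh s ^ (d - 1)) *
        ((2:ℝ) ^ (d - 1) * ((d:ℝ) - 1)) * Real.exp (-R * ((d:ℝ) - 1)) := by
      rw [hAdef]; unfold hypBallVol; field_simp
    rw [hAeq]
    have hpos : (0:ℝ) < (2:ℝ) ^ (d - 1) * ((d:ℝ) - 1) := by positivity
    calc (∫ s in (0:ℝ)..R, Real.sinh s ^ (d - 1)) * ((2:ℝ) ^ (d - 1) * ((d:ℝ) - 1))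
          * Real.exp (-R * ((d:ℝ) - 1))
        ≤ (Real.exp (((d:ℝ) - 1) * R) / ((2:ℝ) ^ (d - 1) * ((d:ℝ) - 1)))
          * ((2:ℝ) ^ (d - 1) * ((d:ℝ) - 1)) * Real.exp (-R * ((d:ℝ) - 1)) := by
          gcongr
      _ = Real.exp (((d:ℝ) - 1) * R) * Real.exp (-R * ((d:ℝ) - 1)) := by
          rw [div_mul_cancel₀ _ hpos.ne']
      _ = 1 := by rw [← Real.exp_add]; ring_nf; exact Real.exp_zero
  -- pointwise bound
  set Cc : ℝ := (k:ℝ)^(k-1) * ((c' + v) / w)^(k-1) * Real.exp (-c') * Real.exp (c'/k) with hCc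
  set g : ℝ → ℝ := fun u => Cc * Real.exp (-(1/(k:ℝ)) * u) with hg
  have hcastk : ((k - 1 : ℕ) : ℝ) = (k:ℝ) - 1 := by
    have : 1 ≤ k := by omega
    push_cast [this]; ring
  have key : ∀ u ∈ Set.Ioi c', rhoDensity d k R u ≤ g u := by
    intro u hu
    have hu' : c' < u := hu
    have ht : 0 ≤ u - c' := by linarith
    have huv : 0 ≤ u + v := by linarith
    have hrho : rhoDensity d k R u = Real.exp (-u) * A * ((u + v) / w)^(k-1) := by
      unfold rhoDensity
      rw [hAdef, ← hvdef, ← hwdef]; ring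
    have hP0 : 0 ≤ ((u + v) / w)^(k-1) := by positivity
    have step0 : Real.exp (-u) * A * ((u + v) / w)^(k-1)
        ≤ Real.exp (-u) * ((u + v) / w)^(k-1) := by
      have h := mul_le_mul_of_nonneg_right
        (mul_le_mul_of_nonneg_left hA1 (Real.exp_pos (-u)).le) hP0
      simpa using h
    -- u + v ≤ (c' + v) * (k * exp ((u-c')/k))
    have hE : 1 + (u - c') ≤ (k:ℝ) * Real.exp ((u - c')/k) := by
      have h1 := Real.add_one_le_exp ((u - c')/k)
      have h2 : (k:ℝ) * ((u - c')/k + 1) ≤ (k:ℝ) * Real.exp ((u - c')/k) :=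
        mul_le_mul_of_nonneg_left h1 hk0.le
      have h3 : (k:ℝ) * ((u - c')/k + 1) = (u - c') + k := by field_simp
      linarith
    have step1 : u + v ≤ (c' + v) * ((k:ℝ) * Real.exp ((u - c')/k)) := by
      have h1 : u + v ≤ (c' + v) * (1 + (u - c')) := by
        have hm := mul_nonneg (show (0:ℝ) ≤ c' + v - 1 by linarith) ht
        nlinarith [hm]
      have h2 : (c' + v) * (1 + (u - c')) ≤ (c' + v) * ((k:ℝ) * Real.exp ((u - c')/k)) :=
        mul_le_mul_of_nonneg_left hE (by linarith)
      linarith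
    have step2 : ((u + v) / w)^(k-1)
        ≤ ((c' + v) / w * ((k:ℝ) * Real.exp ((u - c')/k)))^(k-1) := by
      apply pow_le_pow_left₀ (by positivity)
      rw [div_mul_eq_mul_div]
      exact (div_le_div_iff_of_pos_right hw0).mpr step1
    have hEexp : Real.exp ((u - c')/k) ^ (k-1) = Real.exp (((k-1:ℕ):ℝ) * ((u - c')/k)) := by
      rw [Real.exp_nat_mul]
    have hexpeq : Real.exp (-u) * Real.exp (((k-1:ℕ):ℝ) * ((u - c')/k))
        = Real.exp (-c') * Real.exp (c'/k) * Real.exp (-(1/(k:ℝ)) * u) := by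
      rw [← Real.exp_add, ← Real.exp_add, ← Real.exp_add]
      congr 1
      rw [hcastk]
      field_simp
      ring
    calc rhoDensity d k R u = Real.exp (-u) * A * ((u + v) / w)^(k-1) := hrho
      _ ≤ Real.exp (-u) * ((u + v) / w)^(k-1) := step0
      _ ≤ Real.exp (-u) * ((c' + v) / w * ((k:ℝ) * Real.exp ((u - c')/k)))^(k-1) := by
          exact mul_le_mul_of_nonneg_left step2 (Real.exp_pos _).le
      _ = g u := by
          rw [hg]
          simp only []
          rw [mul_pow, mul_pow, hEexp, hCc]
          calc Real.exp (-u) * (((c' + v) / w)^(k-1) * ((k:ℝ)^(k-1) *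
                  Real.exp (((k-1:ℕ):ℝ) * ((u - c')/k))))
              = (k:ℝ)^(k-1) * ((c' + v) / w)^(k-1) *
                  (Real.exp (-u) * Real.exp (((k-1:ℕ):ℝ) * ((u - c')/k))) := by ring
            _ = (k:ℝ)^(k-1) * ((c' + v) / w)^(k-1) *
                  (Real.exp (-c') * Real.exp (c'/k) * Real.exp (-(1/(k:ℝ)) * u)) := by
                rw [hexpeq]
            _ = (k:ℝ)^(k-1) * ((c' + v) / w)^(k-1) * Real.exp (-c') * Real.exp (c'/k) *
                  Real.exp (-(1/(k:ℝ)) * u) := by ring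
    done
  have hbk : (0:ℝ) < 1/(k:ℝ) := by positivity
  have hgint : MeasureTheory.IntegrableOn g (Set.Ioi c') MeasureTheory.volume := by
    have h := (exp_neg_integrableOn_Ioi c' hbk).const_mul Cc
    exact h
  have hρcont : Continuous (rhoDensity d k R) := by
    unfold rhoDensity
    continuity
  have hρnonneg : ∀ u ∈ Set.Ioi c', 0 ≤ rhoDensity d k R u := by
    intro u hu
    have hu' : c' < u := hu
    have huv : 0 ≤ u + v := by linarith
    have hrho : rhoDensity d k R u = Real.exp (-u) * A * ((u + v) / w)^(k-1) := by
      unfold rhoDensity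
      rw [hAdef, ← hvdef, ← hwdef]; ring
    rw [hrho]
    have hP0 : 0 ≤ ((u + v) / w)^(k-1) := by positivity
    positivity
  have hρint : MeasureTheory.IntegrableOn (rhoDensity d k R) (Set.Ioi c') MeasureTheory.volume := by
    apply MeasureTheory.Integrable.mono' hgint
      (hρcont.aestronglyMeasurable.restrict)
    rw [MeasureTheory.ae_restrict_iff' measurableSet_Ioi]
    filter_upwards with u
    intro hu
    rw [Real.norm_eq_abs, abs_of_nonneg (hρnonneg u hu)]
    exact key u hu
  have hmono : (∫ u in Set.Ioi c', rhoDensity d k R u) ≤ ∫ u in Set.Ioi c', g u :=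
    MeasureTheory.setIntegral_mono_on hρint hgint measurableSet_Ioi key
  have hgval : (∫ u in Set.Ioi c', g u) = Cc * ((k:ℝ) * Real.exp (-(1/(k:ℝ)) * c')) := by
    rw [hg]
    simp only []
    rw [MeasureTheory.integral_const_mul]
    congr 1
    have h := MeasureTheory.integral_comp_mul_left_Ioi (fun x => Real.exp (-x)) c' hbk
    simp only [smul_eq_mul] at h
    have heq : (fun u : ℝ => Real.exp (-(1/(k:ℝ)) * u)) = fun u : ℝ => Real.exp (-(1/(k:ℝ) * u)) := by
      funext u; rw [neg_mul]
    rw [heq, h, integral_exp_neg_Ioi, one_div, inv_inv, neg_mul]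
  have hfin : Cc * ((k:ℝ) * Real.exp (-(1/(k:ℝ)) * c'))
      = (k:ℝ)^k * Real.exp (-c') * ((c' + v) / w)^(k-1) := by
    have hexp1 : Real.exp (c'/k) * Real.exp (-(1/(k:ℝ)) * c') = 1 := by
      rw [← Real.exp_add, show c'/(k:ℝ) + -(1/(k:ℝ)) * c' = 0 by ring, Real.exp_zero]
    have hpow : (k:ℝ)^(k-1) * (k:ℝ) = (k:ℝ)^k := by
      rw [← pow_succ]
      congr 1
      omega
    calc Cc * ((k:ℝ) * Real.exp (-(1/(k:ℝ)) * c'))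
        = ((k:ℝ)^(k-1) * (k:ℝ)) * (Real.exp (c'/k) * Real.exp (-(1/(k:ℝ)) * c'))
          * (Real.exp (-c') * ((c' + v) / w)^(k-1)) := by rw [hCc]; ring
      _ = (k:ℝ)^k * Real.exp (-c') * ((c' + v) / w)^(k-1) := by
          rw [hexp1, hpow]; ring
  calc (∫ u in Set.Ioi c', rhoDensity d k R u) ≤ ∫ u in Set.Ioi c', g u := hmono
    _ = (k:ℝ)^k * Real.exp (-c') * ((c' + v) / w)^(k-1) := by rw [hgval, hfin]
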